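/- arXiv:1906.04807 — 4 statements merged into one kernel-verified Lean document; each statement's English description precedes it below -/
import Mathlib

section
/- Let B be a non-empty variety in G_1 × ... × G_k (the zero set of a multiaffine map α : G_1 × ... × G_k → F^d) over a finite field F of size f. Then |B| ≥ f^{-kd} · |G_1 × ... × G_k|. -/
open scoped BigOperators

/-- `α` is multiaffine: for each coordinate `i` and each fixed choice of the other
coordinates, the induced map `G i → M` is affine (a linear map plus a constant). -/
def MultiaffineOn (F : Type*) [Field F] {k : ℕ} {G : Fin k → Type*}
    [∀ i, AddCommGroup (G i)] [∀ i, Module F (G i)]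
    {M : Type*} [AddCommGroup M] [Module F M]
    (α : (∀ i, G i) → M) : Prop :=
  ∀ (i : Fin k) (x : ∀ j, G j), ∃ (T : G i →ₗ[F] M) (c : M),
    ∀ v : G i, α (Function.update x i v) = T v + c

lemma affine_count {F V : Type*} [Field F] [Fintype F] [AddCommGroup V] [Module F V] [Fintype V] {d : ℕ}
    (T : V →ₗ[F] (Fin d → F)) (c : Fin d → F) (v0 : V) (h0 : T v0 + c = 0) :
    Fintype.card V ≤ Nat.card {v : V // T v + c = 0} * (Fintype.card F)^d := by
  classical
  set f := T.toAddMonoidHom with hf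
  have hker : Nat.card {v : V // T v + c = 0} = Nat.card f.ker := by
    refine Nat.card_congr ⟨fun v => ⟨v.1 - v0, ?_⟩, fun w => ⟨w.1 + v0, ?_⟩, ?_, ?_⟩
    · have h1 := eq_neg_of_add_eq_zero_left v.2
      have h2 := eq_neg_of_add_eq_zero_left h0
      simp only [AddMonoidHom.mem_ker, hf, LinearMap.toAddMonoidHom_coe, map_sub, h1, h2, sub_self]
    · have := w.2
      simp only [AddMonoidHom.mem_ker, hf, LinearMap.toAddMonoidHom_coe] at this
      simp only [map_add, this, zero_add, h0]
    · intro v; ext; simp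
    · intro w; ext; simp
  have hq : Nat.card V = Nat.card (V ⧸ f.ker) * Nat.card f.ker :=
    AddSubgroup.card_eq_card_quotient_mul_card_addSubgroup f.ker
  have hr : Nat.card (V ⧸ f.ker) = Nat.card f.range :=
    Nat.card_congr (QuotientAddGroup.quotientKerEquivRange f).toEquiv
  have hrange : Nat.card f.range ≤ (Fintype.card F)^d := by
    have := Nat.card_le_card_of_injective (fun x : f.range => (x : Fin d → F)) Subtype.val_injective
    simpa [Nat.card_eq_fintype_card, Fintype.card_fun] using this
  calc Fintype.card V = Nat.card V := (Nat.card_eq_fintype_card).symm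
    _ = Nat.card f.range * Nat.card f.ker := by rw [hq, hr]
    _ ≤ (Fintype.card F)^d * Nat.card f.ker := Nat.mul_le_mul_right _ hrange
    _ = Nat.card {v : V // T v + c = 0} * (Fintype.card F)^d := by rw [hker, mul_comm]

/-- If `B` is a nonempty variety in `G₁ × ⋯ × G_k`, i.e. the zero set of a
multiaffine map `α : G₁ × ⋯ × G_k → F^d` over a finite field `F` of size `f`, then
`|B| ≥ f^(-(k*d)) * |G₁ × ⋯ × G_k|`. -/
theorem variety_size {k d : ℕ} {F : Type*} [Field F] [Fintype F]
    {G : Fin k → Type*} [∀ i, AddCommGroup (G i)] [∀ i, Module F (G i)]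
    [∀ i, Fintype (G i)]
    (α : (∀ i, G i) → (Fin d → F)) (hα : MultiaffineOn F α)
    (B : Set (∀ i, G i)) (hB : B = {x | α x = 0}) (hne : B.Nonempty) :
    ((Fintype.card F : ℝ)) ^ (-((k * d : ℕ) : ℤ)) * (Fintype.card (∀ i, G i) : ℝ)
      ≤ (Nat.card B : ℝ) := by
  classical
  obtain ⟨b, hb⟩ := hne
  rw [hB] at hb
  have hb0 : α b = 0 := hb
  set q := Fintype.card F with hqdef
  -- the chain of sets
  set S : ℕ → Finset (∀ i, G i) := fun j => Finset.univ.filter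
      (fun x => α x = 0 ∧ ∀ i : Fin k, j ≤ (i : ℕ) → x i = b i) with hS
  -- key step
  have step : ∀ j, ∀ hj : j < k,
      (S j).card * Fintype.card (G ⟨j, hj⟩) ≤ (S (j+1)).card * q^d := by
    intro j hj
    set i0 : Fin k := ⟨j, hj⟩ with hi0
    set Z : (∀ i, G i) → Finset (G i0) := fun x =>
      Finset.univ.filter (fun v => α (Function.update x i0 v) = 0) with hZ
    -- each fiber is large
    have hfiber : ∀ x ∈ S j, Fintype.card (G i0) ≤ (Z x).card * q^d := by
      intro x hx
      simp only [hS, Finset.mem_filter, Finset.mem_univ, true_and] at hx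
      obtain ⟨T, c, hTc⟩ := hα i0 x
      have hx0 : T (x i0) + c = 0 := by
        rw [← hTc (x i0), Function.update_eq_self]; exact hx.1
      have := affine_count T c (x i0) hx0
      have hcard : (Z x).card = Nat.card {v : G i0 // T v + c = 0} := by
        rw [Nat.card_eq_fintype_card, Fintype.card_subtype]
        congr 1
        apply Finset.filter_congr
        intro v _
        simp [hZ, hTc v]
      rw [hcard]; exact this
    -- the union
    set U : Finset (∀ i, G i) := (S j).biUnion
        (fun x => (Z x).image (fun v => Function.update x i0 v)) with hU
    have hUsub : U ⊆ S (j+1) := by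
      intro y hy
      simp only [hU, Finset.mem_biUnion, Finset.mem_image] at hy
      obtain ⟨x, hx, v, hv, rfl⟩ := hy
      simp only [hS, Finset.mem_filter, Finset.mem_univ, true_and] at hx ⊢
      simp only [hZ, Finset.mem_filter, Finset.mem_univ, true_and] at hv
      refine ⟨hv, ?_⟩
      intro i hi
      have hne' : i ≠ i0 := by
        intro h; rw [h, hi0] at hi; simp at hi
      rw [Function.update_of_ne hne']
      exact hx.2 i (by omega)
    have hdisj : ∀ x ∈ S j, ∀ x' ∈ S j, x ≠ x' →
        Disjoint ((Z x).image (fun v => Function.update x i0 v))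
          ((Z x').image (fun v => Function.update x' i0 v)) := by
      intro x hx x' hx' hne'
      simp only [hS, Finset.mem_filter, Finset.mem_univ, true_and] at hx hx'
      rw [Finset.disjoint_left]
      intro y hy hy'
      simp only [Finset.mem_image] at hy hy'
      obtain ⟨v, _, hv⟩ := hy
      obtain ⟨v', _, hv'⟩ := hy'
      apply hne'
      funext i
      by_cases h : i = i0
      · rw [h, hx.2 i0 le_rfl, hx'.2 i0 le_rfl]
      · have := congrFun (hv.trans hv'.symm) i
        rwa [Function.update_of_ne h, Function.update_of_ne h] at this
    have hcardU : U.card = ∑ x ∈ S j, (Z x).card := by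
      rw [hU, Finset.card_biUnion hdisj]
      apply Finset.sum_congr rfl
      intro x _
      apply Finset.card_image_of_injective
      intro v v' hvv'
      have := congrFun hvv' i0
      simpa using this
    calc (S j).card * Fintype.card (G i0)
        = ∑ _x ∈ S j, Fintype.card (G i0) := by rw [Finset.sum_const, smul_eq_mul]
      _ ≤ ∑ x ∈ S j, (Z x).card * q^d := Finset.sum_le_sum hfiber
      _ = (∑ x ∈ S j, (Z x).card) * q^d := by rw [Finset.sum_mul]
      _ = U.card * q^d := by rw [hcardU]
      _ ≤ (S (j+1)).card * q^d := Nat.mul_le_mul_right _ (Finset.card_le_card hUsub)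
  -- induction
  have main : ∀ j, j ≤ k →
      ∏ i ∈ Finset.univ.filter (fun i : Fin k => (i : ℕ) < j), Fintype.card (G i)
        ≤ (S j).card * q^(d*j) := by
    intro j
    induction j with
    | zero =>
      intro _
      have : b ∈ S 0 := by
        simp only [hS, Finset.mem_filter, Finset.mem_univ, true_and]
        exact ⟨hb0, by intros; trivial⟩
      have hpos : 1 ≤ (S 0).card := Finset.card_pos.mpr ⟨b, this⟩
      simpa using hpos
    | succ j ih =>
      intro hjk
      have hj : j < k := by omega
      set i0 : Fin k := ⟨j, hj⟩ with hi0
      have hsplit : Finset.univ.filter (fun i : Fin k => (i : ℕ) < j + 1)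
          = insert i0 (Finset.univ.filter (fun i : Fin k => (i : ℕ) < j)) := by
        ext i
        simp only [Finset.mem_filter, Finset.mem_univ, true_and, Finset.mem_insert]
        constructor
        · intro h
          rcases Nat.lt_succ_iff_lt_or_eq.mp h with h' | h'
          · exact Or.inr h'
          · exact Or.inl (by rw [hi0]; exact Fin.ext h')
        · rintro (rfl | h)
          · exact Nat.lt_succ_self j
          · omega
      rw [hsplit, Finset.prod_insert (by
        simp only [Finset.mem_filter, Finset.mem_univ, true_and, hi0, Fin.val_mk]; omega)]
      calc Fintype.card (G i0) * ∏ i ∈ Finset.univ.filter (fun i : Fin k => (i : ℕ) < j), Fintype.card (G i)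
          ≤ Fintype.card (G i0) * ((S j).card * q^(d*j)) :=
            Nat.mul_le_mul_left _ (ih (by omega))
        _ = ((S j).card * Fintype.card (G i0)) * q^(d*j) := by ring
        _ ≤ ((S (j+1)).card * q^d) * q^(d*j) :=
            Nat.mul_le_mul_right _ (step j hj)
        _ = (S (j+1)).card * q^(d*(j+1)) := by ring
  have hfinal := main k le_rfl
  have hfull : Finset.univ.filter (fun i : Fin k => (i : ℕ) < k) = Finset.univ := by
    ext i; simp [i.isLt]
  rw [hfull] at hfinal
  have hprod : ∏ i : Fin k, Fintype.card (G i) = Fintype.card (∀ i, G i) :=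
    (Fintype.card_pi).symm
  rw [hprod] at hfinal
  -- S k ⊆ B
  have hSB : (S k).card ≤ Nat.card B := by
    rw [hB]
    rw [Nat.card_coe_set_eq, Set.ncard_eq_toFinset_card']
    apply Finset.card_le_card
    intro x hx
    simp only [hS, Finset.mem_filter, Finset.mem_univ, true_and] at hx
    simp only [Set.mem_toFinset, Set.mem_setOf_eq]
    exact hx.1
  have hnat : Fintype.card (∀ i, G i) ≤ Nat.card B * q^(k*d) := by
    calc Fintype.card (∀ i, G i) ≤ (S k).card * q^(d*k) := hfinal
      _ ≤ Nat.card B * q^(d*k) := Nat.mul_le_mul_right _ hSB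
      _ = Nat.card B * q^(k*d) := by rw [mul_comm d k]
  -- convert to reals
  have hqpos : (0:ℝ) < (q:ℝ) := by
    have : 0 < q := Fintype.card_pos
    exact_mod_cast this
  rw [zpow_neg, zpow_natCast]
  rw [inv_mul_le_iff₀ (by positivity)]
  have : (Fintype.card (∀ i, G i) : ℝ) ≤ (Nat.card B : ℝ) * (q:ℝ)^(k*d) := by
    exact_mod_cast hnat
  calc (Fintype.card (∀ i, G i) : ℝ) ≤ (Nat.card B : ℝ) * (q:ℝ)^(k*d) := this
    _ = (q:ℝ)^(k*d) * (Nat.card B : ℝ) := by ring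
end

section
/- Let ρ, β_1, ..., β_r : G_1 × ... × G_k → F be multilinear forms and let m be a natural number such that for all λ ∈ F^r, |E_{x_1,...,x_k} χ(ρ(x) + Σ_{i∈[r]} λ_i β_i(x))| < f^{-k(r+m)}, where f = |F|. Then for any multilinear forms γ_1, ..., γ_m, where γ_i : G_{I_i} → F is defined on coordinates indexed by a nonempty proper subset I_i ⊊ [k], there exists a point x = (x_1,...,x_k) with ρ(x) = 1, β_i(x) = 0 for all i ∈ [r], and γ_i(x_{I_i}) = 0 for all i ∈ [m]. -/
open scoped BigOperators

/-- `β` depends only on the coordinates in `I`, and is linear in each coordinate of `I`. -/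
def MultilinearOn (F : Type*) [Field F] {k : ℕ} {G : Fin k → Type*}
    [∀ i, AddCommGroup (G i)] [∀ i, Module F (G i)]
    {M : Type*} [AddCommGroup M] [Module F M]
    (I : Finset (Fin k)) (β : (∀ i, G i) → M) : Prop :=
  (∀ x y : ∀ i, G i, (∀ i ∈ I, x i = y i) → β x = β y) ∧
  (∀ i ∈ I, ∀ (x : ∀ j, G j) (v w : G i),
      β (Function.update x i (v + w))
        = β (Function.update x i v) + β (Function.update x i w)) ∧
  (∀ i ∈ I, ∀ (x : ∀ j, G j) (c : F) (v : G i),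
      β (Function.update x i (c • v)) = c • β (Function.update x i v))

/-- The expectation `E_x χ(α(x))` over uniformly random `x`. -/
noncomputable def expChar {k : ℕ} {F : Type*} [Field F] {G : Fin k → Type*}
    [∀ i, AddCommGroup (G i)] [∀ i, Module F (G i)] [∀ i, Fintype (G i)]
    (χ : AddChar F ℂ) (α : (∀ i, G i) → F) : ℂ :=
  (∑ x : ∀ i, G i, χ (α x)) / (Fintype.card (∀ i, G i) : ℂ)

set_option linter.unusedSectionVars false

open Finset Function
open scoped Classical

namespace NonzeroPointAux

universe u v

section Helpers

variable {F : Type*} [Field F] [Fintype F]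

/-- Linearity in coordinate `i`. -/
def LinAt {k : ℕ} {G : Fin k → Type u} [∀ i, AddCommGroup (G i)] [∀ i, Module F (G i)]
    (i : Fin k) (α : (∀ j, G j) → F) : Prop :=
  (∀ x v w, α (Function.update x i (v + w))
      = α (Function.update x i v) + α (Function.update x i w)) ∧
  (∀ x (c : F) v, α (Function.update x i (c • v)) = c * α (Function.update x i v))

variable {k : ℕ} {G : Fin k → Type u} [∀ i, AddCommGroup (G i)] [∀ i, Module F (G i)]

theorem multilinearOn_linAt {I : Finset (Fin k)} {α : (∀ j, G j) → F}
    (h : MultilinearOn F I α) {i : Fin k} (hi : i ∈ I) : LinAt (F := F) i α := by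
  refine ⟨fun x v w => h.2.1 i hi x v w, fun x c v => ?_⟩
  have := h.2.2 i hi x c v
  rwa [smul_eq_mul] at this

theorem linAt_combo {ι : Type v} [Fintype ι] {i : Fin k} {ρ : (∀ j, G j) → F}
    {β : ι → (∀ j, G j) → F} (hρ : LinAt (F := F) i ρ) (hβ : ∀ j, LinAt (F := F) i (β j))
    (lam : ι → F) : LinAt (F := F) i (fun x => ρ x + ∑ j, lam j * β j x) := by
  constructor
  · intro x v w
    dsimp only
    have h1 : ∀ j : ι, lam j * β j (Function.update x i (v + w))
        = lam j * β j (Function.update x i v) + lam j * β j (Function.update x i w) := by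
      intro j; rw [(hβ j).1 x v w, mul_add]
    rw [hρ.1 x v w, Finset.sum_congr rfl (fun j _ => h1 j), Finset.sum_add_distrib]
    ring
  · intro x c v
    dsimp only
    have h1 : ∀ j : ι, lam j * β j (Function.update x i (c • v))
        = c * (lam j * β j (Function.update x i v)) := by
      intro j; rw [(hβ j).2 x c v]; ring
    rw [hρ.2 x c v, Finset.sum_congr rfl (fun j _ => h1 j), ← Finset.mul_sum]
    ring

theorem LinAt.sub' {i : Fin k} {α : (∀ j, G j) → F} (h : LinAt (F := F) i α)
    (x : ∀ j, G j) (v w : G i) :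
    α (Function.update x i (v - w)) = α (Function.update x i v) - α (Function.update x i w) := by
  have hm : ∀ u : G i, α (Function.update x i (-u)) = - α (Function.update x i u) := by
    intro u
    have := h.2 x (-1) u
    simpa [neg_smul, one_smul] using this
  rw [sub_eq_add_neg, h.1 x v (-w), hm w, ← sub_eq_add_neg]

theorem sum_char_linear {H : Type*} [AddCommGroup H] [Module F H] [Fintype H]
    (χ : AddChar F ℂ) (hχ : χ ≠ 1) (L : H → F)
    (hadd : ∀ v w, L (v + w) = L v + L w) (hsmul : ∀ (c : F) v, L (c • v) = c * L v) :
    ∑ v, χ (L v) = if ∀ v, L v = 0 then (Fintype.card H : ℂ) else 0 := by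
  classical
  split_ifs with h
  · simp [h]
  · push_neg at h
    obtain ⟨v0, hv0⟩ := h
    obtain ⟨a, ha⟩ := AddChar.ne_one_iff.1 hχ
    set ψ : AddChar H ℂ :=
      { toFun := fun v => χ (L v)
        map_zero_eq_one' := by
          have : L 0 = 0 := by
            have := hsmul 0 0; simpa using this
          simp [this]
        map_add_eq_mul' := by
          intro v w; simp [hadd, AddChar.map_add_eq_mul] } with hψ
    have hψne : ψ ≠ 0 := by
      rw [AddChar.ne_zero_iff]
      refine ⟨((L v0)⁻¹ * a) • v0, ?_⟩
      have : L (((L v0)⁻¹ * a) • v0) = a := by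
        rw [hsmul]; field_simp
      simpa [hψ, this] using ha
    have := AddChar.sum_eq_zero_iff_ne_zero.2 hψne
    simpa [hψ] using this

variable [∀ i, Fintype (G i)]

/-- The fundamental count: for a form linear in coordinate `j`, the character sum equals the
number of points where the slice linear map vanishes identically. -/
theorem sum_char_eq_count (χ : AddChar F ℂ) (hχ : χ ≠ 1) (α : (∀ j, G j) → F) (j : Fin k)
    (hα : LinAt (F := F) j α) :
    ∑ x, χ (α x)
      = ((Finset.univ.filter
          (fun x : ∀ i, G i => ∀ v, α (Function.update x j v) = 0)).card : ℂ) := by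
  classical
  have key : ∀ x : ∀ i, G i, ∑ v, χ (α (Function.update x j v))
      = if ∀ v, α (Function.update x j v) = 0 then (Fintype.card (G j) : ℂ) else 0 := by
    intro x
    exact sum_char_linear χ hχ (fun v => α (Function.update x j v)) (hα.1 x) (hα.2 x)
  have e2 : ∀ p : (∀ i, G i) × G j,
      (fun p : (∀ i, G i) × G j => (Function.update p.1 j p.2, p.1 j))
        ((Function.update p.1 j p.2, p.1 j)) = p := by
    intro p
    simp [Function.update_idem, Function.update_eq_self]
  have hbij : Function.Bijective
      (fun p : (∀ i, G i) × G j => (Function.update p.1 j p.2, p.1 j)) := by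
    apply Function.bijective_iff_has_inverse.2
    exact ⟨fun p => (Function.update p.1 j p.2, p.1 j), fun p => e2 p, fun p => e2 p⟩
  have main : (Fintype.card (G j) : ℂ) * ∑ x, χ (α x)
      = ∑ x : ∀ i, G i, ∑ v, χ (α (Function.update x j v)) := by
    calc (Fintype.card (G j) : ℂ) * ∑ x, χ (α x)
        = ∑ p : (∀ i, G i) × G j, χ (α p.1) := by
          rw [Fintype.sum_prod_type_right]
          simp [Finset.sum_const, Finset.mul_sum]
      _ = ∑ p : (∀ i, G i) × G j, χ (α (Function.update p.1 j p.2)) := by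
          rw [← Fintype.sum_bijective _ hbij _ _ (fun p => rfl)]
      _ = ∑ x : ∀ i, G i, ∑ v, χ (α (Function.update x j v)) := by
          rw [Fintype.sum_prod_type]
  have main2 : ∑ x : ∀ i, G i, ∑ v, χ (α (Function.update x j v))
      = (Fintype.card (G j) : ℂ) *
        ((Finset.univ.filter
          (fun x : ∀ i, G i => ∀ v, α (Function.update x j v) = 0)).card : ℂ) := by
    rw [Finset.sum_congr rfl (fun x _ => key x), Finset.sum_ite, Finset.sum_const,
      Finset.sum_const_zero]
    simp [mul_comm]
  have hcard : (Fintype.card (G j) : ℂ) ≠ 0 := by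
    exact_mod_cast Nat.cast_ne_zero.2 Fintype.card_ne_zero
  exact mul_left_cancel₀ hcard (main.trans main2)

/-- Norm version of the count. -/
theorem norm_expChar_eq_count (χ : AddChar F ℂ) (hχ : χ ≠ 1) (α : (∀ j, G j) → F) (j : Fin k)
    (hα : LinAt (F := F) j α) :
    ‖expChar χ α‖
      = ((Finset.univ.filter
          (fun x : ∀ i, G i => ∀ v, α (Function.update x j v) = 0)).card : ℝ) /
        (Fintype.card (∀ i, G i) : ℝ) := by
  classical
  rw [expChar, sum_char_eq_count χ hχ α j hα, norm_div]
  rw [Complex.norm_natCast, Complex.norm_natCast]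

end Helpers

section Counting

variable {F : Type*} [Field F] [Fintype F]

theorem card_coset_le {Z : Type*} [AddCommGroup Z] [Fintype Z] (E E0 : Z → Prop)
    [DecidablePred E] [DecidablePred E0]
    (h : ∀ z z', E z → E z' → E0 (z - z')) :
    (Finset.univ.filter E).card ≤ (Finset.univ.filter E0).card := by
  rcases (Finset.univ.filter E).eq_empty_or_nonempty with he | ⟨z0, hz0⟩
  · simp [he]
  · rw [Finset.mem_filter] at hz0
    apply Finset.card_le_card_of_injOn (fun z => z - z0)
    · intro z hz
      rw [Finset.mem_coe, Finset.mem_filter] at hz ⊢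
      exact ⟨Finset.mem_univ _, h z z0 hz.2 hz0.2⟩
    · intro a _ b _ hab
      exact sub_left_injective hab

/-- lower bound for the common kernel of finitely many additive maps into `F`. -/
theorem card_ker_ge {Z : Type*} [AddCommGroup Z] [Fintype Z] {ι : Type*} [Fintype ι]
    (φ : ι → Z → F) (hadd : ∀ i v w, φ i (v + w) = φ i v + φ i w) :
    (Fintype.card Z : ℝ)
      ≤ (Fintype.card F : ℝ) ^ (Fintype.card ι) *
        (((Finset.univ.filter (fun z : Z => ∀ i, φ i z = 0)).card : ℝ)) := by
  classical
  set Φ : Z →+ (ι → F) := AddMonoidHom.mk' (fun z i => φ i z)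
    (by intro v w; funext i; exact hadd i v w) with hΦ
  have hker : ∀ z : Z, z ∈ Φ.ker ↔ ∀ i, φ i z = 0 := by
    intro z
    rw [AddMonoidHom.mem_ker, hΦ, funext_iff]
    simp [AddMonoidHom.mk'_apply]
  have h1 : Nat.card Z = Nat.card (Z ⧸ Φ.ker) * Nat.card Φ.ker :=
    AddSubgroup.card_eq_card_quotient_mul_card_addSubgroup Φ.ker
  have h2 : Nat.card (Z ⧸ Φ.ker) ≤ Fintype.card F ^ Fintype.card ι := by
    calc Nat.card (Z ⧸ Φ.ker) = Nat.card Φ.range :=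
          Nat.card_congr (QuotientAddGroup.quotientKerEquivRange Φ).toEquiv
      _ ≤ Nat.card (ι → F) := by
          apply Nat.card_le_card_of_injective _ Subtype.val_injective
      _ = Fintype.card F ^ Fintype.card ι := by
          rw [Nat.card_eq_fintype_card, Fintype.card_fun]
  have h3 : Nat.card Φ.ker = (Finset.univ.filter (fun z : Z => ∀ i, φ i z = 0)).card := by
    rw [Nat.card_eq_fintype_card, Fintype.card_subtype]
    congr 1
    apply Finset.filter_congr
    intro z _
    simp [hker z]
  have h4 : Nat.card Z = Fintype.card Z := Nat.card_eq_fintype_card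
  have := h1
  rw [h3, h4] at this
  have h5 : Fintype.card Z ≤ (Fintype.card F ^ Fintype.card ι) *
      (Finset.univ.filter (fun z : Z => ∀ i, φ i z = 0)).card := by
    rw [this]
    exact Nat.mul_le_mul_right _ h2
  calc (Fintype.card Z : ℝ) ≤ ((Fintype.card F ^ Fintype.card ι) *
      (Finset.univ.filter (fun z : Z => ∀ i, φ i z = 0)).card : ℕ) := by exact_mod_cast h5
    _ = _ := by push_cast; ring

theorem card_subtype_add_card_subtype_le {ι : Type*} [Fintype ι] (P Q : ι → Prop)
    [DecidablePred P] [DecidablePred Q] (h : ∀ i, P i → Q i → False) :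
    Fintype.card {i // P i} + Fintype.card {i // Q i} ≤ Fintype.card ι := by
  rw [Fintype.card_subtype, Fintype.card_subtype]
  rw [← Finset.card_union_of_disjoint]
  · exact Finset.card_le_card (Finset.subset_univ _)
  · rw [Finset.disjoint_left]
    intro i hi hi'
    rw [Finset.mem_filter] at hi hi'
    exact h i hi.2 hi'.2

end Counting

end NonzeroPointAux


namespace NonzeroPointAux

section Transport

variable {F : Type*} [Field F] [Fintype F]
variable {n : ℕ} {G : Fin (n + 1) → Type u} [∀ i, AddCommGroup (G i)] [∀ i, Module F (G i)]

theorem multilinearOn_comp_cons {I : Finset (Fin (n + 1))} {α : (∀ i, G i) → F}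
    (hα : MultilinearOn F I α) (z : G 0) :
    MultilinearOn F (Finset.univ.filter fun j : Fin n => j.succ ∈ I)
      (fun x' : ∀ i : Fin n, G i.succ => α (Fin.cons z x')) := by
  refine ⟨?_, ?_, ?_⟩
  · intro x y hxy
    apply hα.1
    intro i hi
    induction i using Fin.cases with
    | zero => simp
    | succ j =>
      simp only [Fin.cons_succ]
      exact hxy j (Finset.mem_filter.2 ⟨Finset.mem_univ _, hi⟩)
  · intro i hi x v w
    have hi' : i.succ ∈ I := (Finset.mem_filter.1 hi).2
    simp only [Fin.cons_update]
    exact hα.2.1 i.succ hi' (Fin.cons z x) v w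
  · intro i hi x c v
    have hi' : i.succ ∈ I := (Finset.mem_filter.1 hi).2
    simp only [Fin.cons_update]
    exact hα.2.2 i.succ hi' (Fin.cons z x) c v

theorem cons_eq_of_singleton {I : Finset (Fin (n + 1))} {α : (∀ i, G i) → F}
    (hα : MultilinearOn F I α) (hI : I = {0}) (z : G 0) (x' y' : ∀ i : Fin n, G i.succ) :
    α (Fin.cons z x') = α (Fin.cons z y') := by
  apply hα.1
  intro i hi
  rw [hI, Finset.mem_singleton] at hi
  subst hi
  simp

theorem cons_add_of_singleton {I : Finset (Fin (n + 1))} {α : (∀ i, G i) → F}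
    (hα : MultilinearOn F I α) (hI : I = {0}) (v w : G 0) (x' : ∀ i : Fin n, G i.succ) :
    α (Fin.cons (v + w) x') = α (Fin.cons v x') + α (Fin.cons w x') := by
  have h0 : (0 : Fin (n + 1)) ∈ I := by rw [hI]; simp
  have key := hα.2.1 0 h0 (Fin.cons v x') v w
  rw [Fin.update_cons_zero] at key
  have h1 : Function.update (Fin.cons v x') 0 v = Fin.cons v x' := Fin.update_cons_zero ..
  have h2 : Function.update (Fin.cons v x') 0 w = Fin.cons w x' := Fin.update_cons_zero ..
  rw [h1, h2] at key
  exact key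

end Transport

section Base

variable {F : Type*} [Field F] [Fintype F]
variable {G : Fin 1 → Type u} [∀ i, AddCommGroup (G i)] [∀ i, Module F (G i)]

theorem fin1_linear {α : (∀ i, G i) → F} (hα : MultilinearOn F Finset.univ α) :
    IsLinearMap F α := by
  have fin1_add : ∀ x y : ∀ i, G i, x + y = Function.update x 0 (x 0 + y 0) := by
    intro x y
    funext i
    have : i = 0 := Subsingleton.elim i 0
    subst this
    simp
  have fin1_smul : ∀ (c : F) (x : ∀ i, G i), c • x = Function.update x 0 (c • x 0) := by
    intro c x
    funext i
    have : i = 0 := Subsingleton.elim i 0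
    subst this
    simp
  constructor
  · intro x y
    rw [fin1_add x y, hα.2.1 0 (Finset.mem_univ _) x (x 0) (y 0)]
    congr 1
    · congr 1
      funext i
      have : i = 0 := Subsingleton.elim i 0
      subst this; simp
    · congr 1
      funext i
      have : i = 0 := Subsingleton.elim i 0
      subst this; simp
  · intro c x
    rw [fin1_smul c x, hα.2.2 0 (Finset.mem_univ _) x c (x 0), smul_eq_mul]
    congr 2
    funext i
    have : i = 0 := Subsingleton.elim i 0
    subst this; simp

theorem base_linear (ιβ : Type v) [Fintype ιβ] (ρ : (∀ i, G i) → F)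
    (hρ : MultilinearOn F Finset.univ ρ) (β : ιβ → (∀ i, G i) → F)
    (hβ : ∀ j, MultilinearOn F Finset.univ (β j)) :
    (∃ lam : ιβ → F, ∀ x, ρ x + ∑ j, lam j * β j x = 0) ∨
      (∃ x, ρ x = 1 ∧ ∀ j, β j x = 0) := by
  have hρl := fin1_linear hρ
  have hβl := fun j => fin1_linear (hβ j)
  set T := F × (ιβ → F) with hT
  set Φ : (∀ i, G i) →ₗ[F] T :=
    { toFun := fun x => (ρ x, fun j => β j x)
      map_add' := by
        intro x y
        ext
        · exact hρl.map_add x y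
        · exact (hβl _).map_add x y
      map_smul' := by
        intro c x
        ext
        · exact hρl.map_smul c x
        · exact (hβl _).map_smul c x } with hΦ
  by_cases hmem : ((1 : F), (0 : ιβ → F)) ∈ LinearMap.range Φ
  · right
    obtain ⟨x, hx⟩ := hmem
    refine ⟨x, ?_, ?_⟩
    · exact congrArg Prod.fst hx
    · intro j
      have := congrArg Prod.snd hx
      exact congrFun this j
  · left
    obtain ⟨f, hf1, hf2⟩ :=
      Submodule.exists_dual_map_eq_bot_of_notMem hmem inferInstance
    have hf0 : ∀ x, f (Φ x) = 0 := by
      intro x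
      have : f (Φ x) ∈ (LinearMap.range Φ).map f :=
        Submodule.mem_map_of_mem (LinearMap.mem_range_self Φ x)
      rw [hf2] at this
      exact (Submodule.mem_bot F).1 this
    set c0 := f ((1 : F), (0 : ιβ → F)) with hc0
    set c : ιβ → F := fun j => f ((0 : F), (Pi.single j (1 : F) : ιβ → F)) with hc
    have hsingle : ∀ (b : ιβ → F) (j : ιβ),
        b j • (Pi.single j (1 : F) : ιβ → F) = Pi.single j (b j) := by
      intro b j; funext t
      rcases eq_or_ne t j with rfl | h
      · simp
      · simp [Pi.single_eq_of_ne h]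
    have hdecomp : ∀ a : F, ∀ b : ιβ → F,
        ((a, b) : T) = a • ((1 : F), (0 : ιβ → F))
          + ∑ j, b j • ((0 : F), (Pi.single j (1 : F) : ιβ → F)) := by
      intro a b
      have hsum : ∑ j, (b j • (((0 : F), (Pi.single j (1 : F) : ιβ → F)) : T))
          = ((0 : F), b) := by
        rw [Prod.ext_iff]
        constructor
        · rw [Prod.fst_sum]; simp
        · rw [Prod.snd_sum]
          simp only [Prod.smul_snd]
          rw [Finset.sum_congr rfl (fun j _ => hsingle b j)]
          exact Finset.univ_sum_single b
      rw [hsum, Prod.ext_iff]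
      constructor
      · simp
      · simp
    have hexpand : ∀ x, ρ x * c0 + ∑ j, β j x * c j = 0 := by
      intro x
      have := hf0 x
      rw [hΦ] at this
      simp only [LinearMap.coe_mk, AddHom.coe_mk] at this
      rw [hdecomp (ρ x) (fun j => β j x)] at this
      rw [map_add, map_smul, map_sum] at this
      simp only [map_smul, smul_eq_mul] at this
      rw [← hc0] at this
      exact this
    refine ⟨fun j => c j * c0⁻¹, fun x => ?_⟩
    have h0 : c0 ≠ 0 := hf1
    have hs : ∑ j, β j x * c j = -(ρ x * c0) :=
      eq_neg_of_add_eq_zero_right (hexpand x)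
    have step : ∀ j ∈ Finset.univ, c j * c0⁻¹ * β j x = β j x * c j * c0⁻¹ := by
      intro j _; ring
    rw [Finset.sum_congr rfl step, ← Finset.sum_mul, hs]
    field_simp
    ring

end Base

end NonzeroPointAux

namespace NonzeroPointAux

section Aux

variable {F : Type*} [Field F] [Fintype F]

/-- The number of points `x` where the slice of `α` in direction `j` vanishes identically. -/
noncomputable def countSlice {k : ℕ} (G : Fin k → Type u) [∀ i, AddCommGroup (G i)] [∀ i, Module F (G i)]
    [∀ i, Fintype (G i)] (j : Fin k) (α : (∀ i, G i) → F) : ℕ :=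
  (Finset.univ.filter (fun x : ∀ i, G i => ∀ v, α (Function.update x j v) = 0)).card

theorem norm_expChar_eq_countSlice {k : ℕ} {G : Fin k → Type u} [∀ i, AddCommGroup (G i)]
    [∀ i, Module F (G i)] [∀ i, Fintype (G i)] (χ : AddChar F ℂ) (hχ : χ ≠ 1)
    (α : (∀ j, G j) → F) (j : Fin k) (hα : LinAt (F := F) j α) :
    ‖expChar χ α‖ = (countSlice G j α : ℝ) / (Fintype.card (∀ i, G i) : ℝ) :=
  norm_expChar_eq_count χ hχ α j hα

theorem aux (χ : AddChar F ℂ) (hχ : χ ≠ 1) :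
    ∀ (k : ℕ) (G : Fin k → Type u) [∀ i, AddCommGroup (G i)] [∀ i, Module F (G i)]
      [∀ i, Fintype (G i)] (ιβ ιγ : Type v) [Fintype ιβ] [Fintype ιγ]
      (ρ : (∀ i, G i) → F), MultilinearOn F Finset.univ ρ →
      ∀ β : ιβ → (∀ i, G i) → F, (∀ j, MultilinearOn F Finset.univ (β j)) →
      ∀ I : ιγ → Finset (Fin k), (∀ i, I i ≠ ∅ ∧ I i ≠ Finset.univ) →
      ∀ γ : ιγ → (∀ i, G i) → F, (∀ i, MultilinearOn F (I i) (γ i)) →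
      (∀ lam : ιβ → F, ‖expChar χ (fun x => ρ x + ∑ j, lam j * β j x)‖
          < (Fintype.card F : ℝ)
              ^ (-((k * (Fintype.card ιβ + Fintype.card ιγ) : ℕ) : ℤ))) →
      ∃ x, ρ x = 1 ∧ (∀ j, β j x = 0) ∧ (∀ i, γ i x = 0) := by
  have hq0 : (0 : ℝ) < (Fintype.card F : ℝ) := by exact_mod_cast Fintype.card_pos
  have hq1 : (1 : ℝ) ≤ (Fintype.card F : ℝ) := by
    exact_mod_cast Nat.one_le_iff_ne_zero.2 Fintype.card_ne_zero
  intro k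
  induction k with
  | zero =>
    intro G _ _ _ ιβ ιγ _ _ ρ hρ β hβ I hI γ hγ hbias
    exfalso
    have h := hbias 0
    have hu : Fintype.card (∀ i : Fin 0, G i) = 1 := by
      simp [Fintype.card_pi]
    have hnorm : ‖expChar χ (fun x : ∀ i : Fin 0, G i => ρ x + ∑ j, (0 : ιβ → F) j * β j x)‖
        = 1 := by
      rw [expChar, hu, Fintype.sum_unique]
      simp [AddChar.norm_apply]
    rw [hnorm] at h
    simp only [Nat.zero_mul, Nat.cast_zero, neg_zero, zpow_zero] at h
    exact lt_irrefl _ h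
  | succ n ih =>
    match n, ih with
    | 0, _ =>
      intro G _ _ _ ιβ ιγ _ _ ρ hρ β hβ I hI γ hγ hbias
      have hγ_absurd : ∀ i : ιγ, False := by
        intro i
        have h1 := (hI i).1
        have h2 := (hI i).2
        have huniv : (Finset.univ : Finset (Fin 1)) = {0} := by
          ext c
          simp [Fin.eq_zero c]
        have := Finset.subset_singleton_iff.1 (huniv ▸ Finset.subset_univ (I i))
        rcases this with h | h
        · exact h1 h
        · exact h2 (h.trans huniv.symm)
      rcases base_linear ιβ ρ hρ β hβ with ⟨lam, hall⟩ | ⟨x, hx1, hx2⟩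
      · exfalso
        have h := hbias lam
        have hfn : (fun x => ρ x + ∑ j, lam j * β j x) = fun _ : ∀ i : Fin 1, G i => (0 : F) :=
          funext hall
        rw [hfn] at h
        have hcx : (Fintype.card (∀ i : Fin 1, G i) : ℂ) ≠ 0 := by
          exact_mod_cast Nat.cast_ne_zero.2 Fintype.card_ne_zero
        have hone : expChar χ (fun _ : ∀ i : Fin 1, G i => (0 : F)) = 1 := by
          rw [expChar]
          simp only [AddChar.map_zero_eq_one, Finset.sum_const, Finset.card_univ, nsmul_eq_mul,
            mul_one]
          field_simp
        rw [hone] at h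
        have hle : (Fintype.card F : ℝ)
            ^ (-(((0 + 1) * (Fintype.card ιβ + Fintype.card ιγ) : ℕ) : ℤ)) ≤ 1 := by
          have h0 : (-(((0 + 1) * (Fintype.card ιβ + Fintype.card ιγ) : ℕ) : ℤ)) ≤ 0 :=
            neg_nonpos.2 (by exact_mod_cast Nat.zero_le _)
          have := zpow_le_zpow_right₀ hq1 h0
          simpa using this
        simp only [norm_one] at h
        linarith
      · exact ⟨x, hx1, hx2, fun i => (hγ_absurd i).elim⟩
    | n + 1, ih =>
      intro G _ _ _ ιβ ιγ _ _ ρ hρ β hβ I hI γ hγ hbias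
      set r := Fintype.card ιβ with hr
      set m := Fintype.card ιγ with hm
      set q : ℝ := (Fintype.card F : ℝ) with hqdef
      -- classification of the index sets of the γ's
      set J : ιγ → Finset (Fin (n + 1)) :=
        fun i => Finset.univ.filter (fun j : Fin (n + 1) => j.succ ∈ I i) with hJ
      have hfiltJ : ∀ i : ιγ,
          (Finset.univ.filter (fun j : Fin (n + 1) => j.succ ∈ I i)) = J i := by
        intro i; rw [hJ]
      have hJempty : ∀ i, J i = ∅ → I i = {0} := by
        intro i h
        have hsub : I i ⊆ {0} := by
          intro c hc
          induction c using Fin.cases with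
          | zero => exact Finset.mem_singleton_self 0
          | succ j =>
            exfalso
            have hj : j ∈ J i := by
              rw [← hfiltJ i]
              exact Finset.mem_filter.2 ⟨Finset.mem_univ _, hc⟩
            rw [h] at hj
            exact Finset.notMem_empty _ hj
        rcases Finset.subset_singleton_iff.1 hsub with h' | h'
        · exact absurd h' (hI i).1
        · exact h'
      have hJuniv : ∀ i, J i = Finset.univ → (0 : Fin (n + 1 + 1)) ∉ I i := by
        intro i h h0
        apply (hI i).2
        apply Finset.eq_univ_iff_forall.2
        intro c
        induction c using Fin.cases with
        | zero => exact h0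
        | succ j =>
          have hj : j ∈ J i := h ▸ Finset.mem_univ j
          rw [← hfiltJ i] at hj
          exact (Finset.mem_filter.1 hj).2
      -- cardinalities of the classes
      have hab : Fintype.card {i : ιγ // J i = ∅}
          + Fintype.card {i : ιγ // J i = Finset.univ} ≤ m := by
        rw [hm]
        exact card_subtype_add_card_subtype_le _ _ (fun i h1 h2 => by
          rw [h1] at h2
          exact (Finset.univ_nonempty (α := Fin (n + 1))).ne_empty h2.symm)
      have hbc : Fintype.card {i : ιγ // J i = Finset.univ}
          + Fintype.card {i : ιγ // J i ≠ ∅ ∧ J i ≠ Finset.univ} ≤ m := by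
        rw [hm]
        exact card_subtype_add_card_subtype_le _ _ (fun i h1 h2 => h2.2 h1)
      -- the combined forms
      set Φβ : (ιβ ⊕ {i : ιγ // J i = Finset.univ} → F) → (∀ i : Fin (n + 1 + 1), G i) → F :=
        fun lamB x => ρ x + ∑ j : ιβ, lamB (Sum.inl j) * β j x with hΦβ
      set ΦB : (ιβ ⊕ {i : ιγ // J i = Finset.univ} → F) → (∀ i : Fin (n + 1 + 1), G i) → F :=
        fun lamB x => Φβ lamB x
          + ∑ i : {i : ιγ // J i = Finset.univ}, lamB (Sum.inr i) * γ i.1 x with hΦB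
      have hΦβ_lin : ∀ lamB, ∀ jc : Fin (n + 1 + 1), LinAt (F := F) jc (Φβ lamB) := by
        intro lamB jc
        rw [hΦβ]
        exact linAt_combo (multilinearOn_linAt hρ (Finset.mem_univ _))
          (fun j => multilinearOn_linAt (hβ j) (Finset.mem_univ _)) _
      -- the B-class γ's do not depend on coordinate 0
      have hγB_inv : ∀ (i : {i : ιγ // J i = Finset.univ}) (z z' : G 0)
          (y' : ∀ i : Fin (n + 1), G i.succ),
          γ i.1 (Fin.cons z y') = γ i.1 (Fin.cons z' y') := by
        intro i z z' y'
        apply (hγ i.1).1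
        intro c hc
        induction c using Fin.cases with
        | zero => exact absurd hc (hJuniv i.1 i.2)
        | succ j => simp [Fin.cons_succ]
      -- the coset trick at a single point
      have hΦdiff : ∀ lamB (z z' : G 0) (y' : ∀ i : Fin (n + 1), G i.succ),
          ΦB lamB (Fin.cons z y') = 0 → ΦB lamB (Fin.cons z' y') = 0 →
          Φβ lamB (Fin.cons (z - z') y') = 0 := by
        intro lamB z z' y' h1 h2
        simp only [hΦB] at h1 h2
        have h1' : Φβ lamB (Fin.cons z y')
            = - ∑ i : {i : ιγ // J i = Finset.univ},
                lamB (Sum.inr i) * γ i.1 (Fin.cons z y') :=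
          eq_neg_of_add_eq_zero_left h1
        have h2' : Φβ lamB (Fin.cons z' y')
            = - ∑ i : {i : ιγ // J i = Finset.univ},
                lamB (Sum.inr i) * γ i.1 (Fin.cons z' y') :=
          eq_neg_of_add_eq_zero_left h2
        have hS : ∑ i : {i : ιγ // J i = Finset.univ},
              lamB (Sum.inr i) * γ i.1 (Fin.cons z y')
            = ∑ i : {i : ιγ // J i = Finset.univ},
              lamB (Sum.inr i) * γ i.1 (Fin.cons z' y') :=
          Finset.sum_congr rfl (fun i _ => by rw [hγB_inv i z z' y'])
        have hsub := LinAt.sub' (hΦβ_lin lamB 0) (Fin.cons z y') z z'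
        rw [Fin.update_cons_zero, Fin.update_cons_zero, Fin.update_cons_zero] at hsub
        rw [hsub, h1', h2', hS]
        ring
      -- (H2) summing the restricted counts over z is at most the full count
      have hsum_le : ∀ lamB, (∑ z : G 0, countSlice (fun i : Fin (n + 1) => G i.succ) 0
            (fun x' => ΦB lamB (Fin.cons z x')))
          ≤ countSlice G ((0 : Fin (n + 1)).succ) (Φβ lamB) := by
        intro lamB
        have step1 : (∑ z : G 0, countSlice (fun i : Fin (n + 1) => G i.succ) 0
              (fun x' => ΦB lamB (Fin.cons z x')))
            = ∑ x' : ∀ i : Fin (n + 1), G i.succ, ∑ z : G 0,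
                if (∀ v, ΦB lamB (Fin.cons z (Function.update x' 0 v)) = 0) then 1 else 0 := by
          rw [Finset.sum_comm]
          apply Finset.sum_congr rfl
          intro z _
          rw [countSlice, Finset.card_filter]
        have step2 : ∀ x' : ∀ i : Fin (n + 1), G i.succ,
            (∑ z : G 0,
              if (∀ v, ΦB lamB (Fin.cons z (Function.update x' 0 v)) = 0) then 1 else 0)
            ≤ ∑ z : G 0,
              if (∀ v, Φβ lamB (Fin.cons z (Function.update x' 0 v)) = 0) then 1 else 0 := by
          intro x'
          rw [← Finset.card_filter, ← Finset.card_filter]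
          apply card_coset_le
          intro z z' hz hz' v
          exact hΦdiff lamB z z' (Function.update x' 0 v) (hz v) (hz' v)
        have step3 : countSlice G ((0 : Fin (n + 1)).succ) (Φβ lamB)
            = (∑ x' : ∀ i : Fin (n + 1), G i.succ, ∑ z : G 0,
              if (∀ v, Φβ lamB (Fin.cons z (Function.update x' 0 v)) = 0) then 1 else 0) := by
          rw [countSlice, Finset.card_filter]
          rw [← Equiv.sum_comp (Fin.consEquiv G)
            (fun x => if (∀ v, Φβ lamB (Function.update x ((0 : Fin (n + 1)).succ) v) = 0)
              then 1 else 0)]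
          rw [Fintype.sum_prod_type]
          rw [Finset.sum_comm]
          apply Finset.sum_congr rfl
          intro x' _
          apply Finset.sum_congr rfl
          intro z _
          apply if_congr _ rfl rfl
          constructor
          · intro h v
            have hv := h v
            rwa [show ((Fin.consEquiv G) (z, x')) = Fin.cons z x' from rfl,
              ← Fin.cons_update] at hv
          · intro h v
            rw [show ((Fin.consEquiv G) (z, x')) = Fin.cons z x' from rfl,
              ← Fin.cons_update]
            exact h v
        calc (∑ z : G 0, countSlice (fun i : Fin (n + 1) => G i.succ) 0
              (fun x' => ΦB lamB (Fin.cons z x')))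
            = _ := step1
          _ ≤ _ := Finset.sum_le_sum (fun x' _ => step2 x')
          _ = _ := step3.symm
      -- (H1) the full count is small, by the bias hypothesis
      have hcount_lt : ∀ lamB, (countSlice G ((0 : Fin (n + 1)).succ) (Φβ lamB) : ℝ)
          < (Fintype.card (∀ i : Fin (n + 1 + 1), G i) : ℝ)
            * q ^ (-(((n + 1 + 1) * (r + m) : ℕ) : ℤ)) := by
        intro lamB
        have hlin := hΦβ_lin lamB ((0 : Fin (n + 1)).succ)
        have hnorm := norm_expChar_eq_countSlice χ hχ (Φβ lamB) ((0 : Fin (n + 1)).succ) hlin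
        have hb := hbias (fun j => lamB (Sum.inl j))
        have hfn : (fun x => ρ x + ∑ j, (fun j => lamB (Sum.inl j)) j * β j x) = Φβ lamB := by
          funext x
          simp only [hΦβ]
        rw [hfn, hnorm] at hb
        have hcx : (0 : ℝ) < (Fintype.card (∀ i : Fin (n + 1 + 1), G i) : ℝ) := by
          exact_mod_cast Fintype.card_pos
        have := (div_lt_iff₀ hcx).1 hb
        linarith [this]
      -- abbreviations for the counting
      set ε' : ℝ := q ^ (-(((n + 1) * (r + m) : ℕ) : ℤ)) with hε'
      have hε'pos : 0 < ε' := by rw [hε']; exact zpow_pos hq0 _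
      set cardX' : ℕ := Fintype.card (∀ i : Fin (n + 1), G i.succ) with hcardX'
      have hcardX'pos : (0 : ℝ) < (cardX' : ℝ) := by
        rw [hcardX']; exact_mod_cast Fintype.card_pos
      have hcardsplit : (Fintype.card (∀ i : Fin (n + 1 + 1), G i) : ℕ)
          = Fintype.card (G 0) * cardX' := by
        rw [hcardX', ← Fintype.card_prod]
        exact Fintype.card_congr (Fin.consEquiv G).symm
      have hεsplit : q ^ (-(((n + 1 + 1) * (r + m) : ℕ) : ℤ))
          = ε' * q ^ (-((r + m : ℕ) : ℤ)) := by
        rw [hε', ← zpow_add₀ (ne_of_gt hq0)]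
        congr 1
        push_cast
        ring
      -- the bad set
      set bad := Finset.univ.filter (fun z : G 0 =>
        ∃ lamB : ιβ ⊕ {i : ιγ // J i = Finset.univ} → F,
          (cardX' : ℝ) * ε' ≤ (countSlice (fun i : Fin (n + 1) => G i.succ) 0
            (fun x' => ΦB lamB (Fin.cons z x')) : ℝ)) with hbad
      have hbadL : ∀ lamB : ιβ ⊕ {i : ιγ // J i = Finset.univ} → F,
          ((Finset.univ.filter (fun z : G 0 =>
            (cardX' : ℝ) * ε' ≤ (countSlice (fun i : Fin (n + 1) => G i.succ) 0
              (fun x' => ΦB lamB (Fin.cons z x')) : ℝ))).card : ℝ)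
            < (Fintype.card (G 0) : ℝ) * q ^ (-((r + m : ℕ) : ℤ)) := by
        intro lamB
        set badL := Finset.univ.filter (fun z : G 0 =>
          (cardX' : ℝ) * ε' ≤ (countSlice (fun i : Fin (n + 1) => G i.succ) 0
            (fun x' => ΦB lamB (Fin.cons z x')) : ℝ)) with hbadL'
        have h1 : (badL.card : ℝ) * ((cardX' : ℝ) * ε')
            ≤ ∑ z : G 0, (countSlice (fun i : Fin (n + 1) => G i.succ) 0
              (fun x' => ΦB lamB (Fin.cons z x')) : ℝ) := by
          calc (badL.card : ℝ) * ((cardX' : ℝ) * ε')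
              ≤ ∑ z ∈ badL, (countSlice (fun i : Fin (n + 1) => G i.succ) 0
                (fun x' => ΦB lamB (Fin.cons z x')) : ℝ) := by
                rw [← nsmul_eq_mul]
                apply Finset.card_nsmul_le_sum
                intro z hz
                exact (Finset.mem_filter.1 hz).2
            _ ≤ _ := by
                apply Finset.sum_le_sum_of_subset_of_nonneg (Finset.subset_univ _)
                intro z _ _
                positivity
        have h2 : (∑ z : G 0, (countSlice (fun i : Fin (n + 1) => G i.succ) 0
              (fun x' => ΦB lamB (Fin.cons z x')) : ℝ))
            < (Fintype.card (G 0) : ℝ) * ((cardX' : ℝ) * (ε' * q ^ (-((r + m : ℕ) : ℤ)))) := by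
          calc (∑ z : G 0, (countSlice (fun i : Fin (n + 1) => G i.succ) 0
                (fun x' => ΦB lamB (Fin.cons z x')) : ℝ))
              = ((∑ z : G 0, countSlice (fun i : Fin (n + 1) => G i.succ) 0
                (fun x' => ΦB lamB (Fin.cons z x')) : ℕ) : ℝ) := by push_cast; rfl
            _ ≤ (countSlice G ((0 : Fin (n + 1)).succ) (Φβ lamB) : ℝ) := by
                exact_mod_cast hsum_le lamB
            _ < (Fintype.card (∀ i : Fin (n + 1 + 1), G i) : ℝ)
                * q ^ (-(((n + 1 + 1) * (r + m) : ℕ) : ℤ)) := hcount_lt lamB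
            _ = (Fintype.card (G 0) : ℝ)
                * ((cardX' : ℝ) * (ε' * q ^ (-((r + m : ℕ) : ℤ)))) := by
                rw [hεsplit]
                rw [show (Fintype.card (∀ i : Fin (n + 1 + 1), G i) : ℝ)
                  = ((Fintype.card (G 0) * cardX' : ℕ) : ℝ) by exact_mod_cast hcardsplit]
                push_cast
                ring
        have h3 : (badL.card : ℝ) * ((cardX' : ℝ) * ε')
            < ((Fintype.card (G 0) : ℝ) * q ^ (-((r + m : ℕ) : ℤ))) * ((cardX' : ℝ) * ε') := by
          calc (badL.card : ℝ) * ((cardX' : ℝ) * ε') ≤ _ := h1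
            _ < _ := h2
            _ = ((Fintype.card (G 0) : ℝ) * q ^ (-((r + m : ℕ) : ℤ)))
                * ((cardX' : ℝ) * ε') := by ring
        exact lt_of_mul_lt_mul_right h3 (by positivity)
      have hbadcard : (bad.card : ℝ)
          < (Fintype.card (ιβ ⊕ {i : ιγ // J i = Finset.univ} → F) : ℝ)
            * ((Fintype.card (G 0) : ℝ) * q ^ (-((r + m : ℕ) : ℤ))) := by
        have hsubset : bad ⊆ Finset.univ.biUnion
            (fun lamB : ιβ ⊕ {i : ιγ // J i = Finset.univ} → F =>
              Finset.univ.filter (fun z : G 0 =>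
                (cardX' : ℝ) * ε' ≤ (countSlice (fun i : Fin (n + 1) => G i.succ) 0
                  (fun x' => ΦB lamB (Fin.cons z x')) : ℝ))) := by
          intro z hz
          rw [hbad, Finset.mem_filter] at hz
          obtain ⟨lamB, hlamB⟩ := hz.2
          exact Finset.mem_biUnion.2 ⟨lamB, Finset.mem_univ _,
            Finset.mem_filter.2 ⟨Finset.mem_univ _, hlamB⟩⟩
        have h1 : (bad.card : ℕ) ≤ ∑ lamB : ιβ ⊕ {i : ιγ // J i = Finset.univ} → F,
            (Finset.univ.filter (fun z : G 0 =>
              (cardX' : ℝ) * ε' ≤ (countSlice (fun i : Fin (n + 1) => G i.succ) 0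
                (fun x' => ΦB lamB (Fin.cons z x')) : ℝ))).card :=
          le_trans (Finset.card_le_card hsubset) (Finset.card_biUnion_le)
        have h2 : ((∑ lamB : ιβ ⊕ {i : ιγ // J i = Finset.univ} → F,
            (Finset.univ.filter (fun z : G 0 =>
              (cardX' : ℝ) * ε' ≤ (countSlice (fun i : Fin (n + 1) => G i.succ) 0
                (fun x' => ΦB lamB (Fin.cons z x')) : ℝ))).card : ℕ) : ℝ)
            < (Fintype.card (ιβ ⊕ {i : ιγ // J i = Finset.univ} → F) : ℝ)
              * ((Fintype.card (G 0) : ℝ) * q ^ (-((r + m : ℕ) : ℤ))) := by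
          have hsum : (∑ lamB : ιβ ⊕ {i : ιγ // J i = Finset.univ} → F,
              ((Finset.univ.filter (fun z : G 0 =>
                (cardX' : ℝ) * ε' ≤ (countSlice (fun i : Fin (n + 1) => G i.succ) 0
                  (fun x' => ΦB lamB (Fin.cons z x')) : ℝ))).card : ℝ))
              < ∑ _lamB : ιβ ⊕ {i : ιγ // J i = Finset.univ} → F,
                ((Fintype.card (G 0) : ℝ) * q ^ (-((r + m : ℕ) : ℤ))) := by
            apply Finset.sum_lt_sum_of_nonempty
            · exact Finset.univ_nonempty (α := ιβ ⊕ {i : ιγ // J i = Finset.univ} → F)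
            · intro lamB _
              exact hbadL lamB
          rw [Finset.sum_const, Finset.card_univ, nsmul_eq_mul] at hsum
          calc ((∑ lamB : ιβ ⊕ {i : ιγ // J i = Finset.univ} → F,
              (Finset.univ.filter (fun z : G 0 =>
                (cardX' : ℝ) * ε' ≤ (countSlice (fun i : Fin (n + 1) => G i.succ) 0
                  (fun x' => ΦB lamB (Fin.cons z x')) : ℝ))).card : ℕ) : ℝ)
              = ∑ lamB : ιβ ⊕ {i : ιγ // J i = Finset.univ} → F,
                ((Finset.univ.filter (fun z : G 0 =>
                  (cardX' : ℝ) * ε' ≤ (countSlice (fun i : Fin (n + 1) => G i.succ) 0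
                    (fun x' => ΦB lamB (Fin.cons z x')) : ℝ))).card : ℝ) := by
                push_cast
                rfl
            _ < _ := hsum
        calc (bad.card : ℝ) ≤ _ := by exact_mod_cast h1
          _ < _ := h2
      -- the kernel set
      set kerZ := Finset.univ.filter (fun z : G 0 =>
        ∀ i : {i : ιγ // J i = ∅}, γ i.1 (Fin.cons z 0) = 0) with hkerZ
      have hker : (Fintype.card (G 0) : ℝ)
          ≤ q ^ (Fintype.card {i : ιγ // J i = ∅}) * (kerZ.card : ℝ) := by
        rw [hkerZ, hqdef]
        exact card_ker_ge (fun (i : {i : ιγ // J i = ∅}) (z : G 0) => γ i.1 (Fin.cons z 0))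
          (fun i v w => cons_add_of_singleton (hγ i.1) (hJempty i.1 i.2) v w 0)
      -- compare the bad set and the kernel set
      have hfuncard : (Fintype.card (ιβ ⊕ {i : ιγ // J i = Finset.univ} → F) : ℝ)
          = q ^ (r + Fintype.card {i : ιγ // J i = Finset.univ}) := by
        rw [Fintype.card_fun, Fintype.card_sum, hqdef, hr]
        push_cast
        ring
      have hcompare : (bad.card : ℝ) < (kerZ.card : ℝ) := by
        set a := Fintype.card {i : ιγ // J i = ∅} with ha
        set b := Fintype.card {i : ιγ // J i = Finset.univ} with hb'
        have key1 : q ^ (r + b) * q ^ (-((r + m : ℕ) : ℤ)) ≤ q ^ (-((a : ℕ) : ℤ)) := by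
          rw [← zpow_natCast q (r + b), ← zpow_add₀ (ne_of_gt hq0)]
          apply zpow_le_zpow_right₀ hq1
          have : (a : ℤ) + (b : ℤ) ≤ (m : ℤ) := by exact_mod_cast hab
          push_cast
          linarith
        have key2 : (Fintype.card (G 0) : ℝ) * q ^ (-((a : ℕ) : ℤ)) ≤ (kerZ.card : ℝ) := by
          have hpow : (0 : ℝ) < q ^ a := pow_pos hq0 _
          rw [zpow_neg, zpow_natCast]
          rw [← div_eq_mul_inv, div_le_iff₀ hpow]
          calc (Fintype.card (G 0) : ℝ) ≤ q ^ a * (kerZ.card : ℝ) := hker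
            _ = (kerZ.card : ℝ) * q ^ a := by ring
        calc (bad.card : ℝ)
            < (Fintype.card (ιβ ⊕ {i : ιγ // J i = Finset.univ} → F) : ℝ)
              * ((Fintype.card (G 0) : ℝ) * q ^ (-((r + m : ℕ) : ℤ))) := hbadcard
          _ = (Fintype.card (G 0) : ℝ) * (q ^ (r + b) * q ^ (-((r + m : ℕ) : ℤ))) := by
              rw [hfuncard]; ring
          _ ≤ (Fintype.card (G 0) : ℝ) * q ^ (-((a : ℕ) : ℤ)) := by
              apply mul_le_mul_of_nonneg_left key1 (by positivity)
          _ ≤ (kerZ.card : ℝ) := key2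
      have hnat : bad.card < kerZ.card := by exact_mod_cast hcompare
      have hne : ¬ kerZ ⊆ bad := by
        intro hsub
        exact absurd (Finset.card_le_card hsub) (not_le.2 hnat)
      obtain ⟨z, hzker, hzbad⟩ := Finset.not_subset.1 hne
      -- z is good
      have hgood : ∀ lamB : ιβ ⊕ {i : ιγ // J i = Finset.univ} → F,
          (countSlice (fun i : Fin (n + 1) => G i.succ) 0
            (fun x' => ΦB lamB (Fin.cons z x')) : ℝ) < (cardX' : ℝ) * ε' := by
        intro lamB
        by_contra hcon
        push_neg at hcon
        exact hzbad (by rw [hbad]; exact Finset.mem_filter.2 ⟨Finset.mem_univ _, ⟨lamB, hcon⟩⟩)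
      -- transported multilinearity
      have hρ'm : MultilinearOn F Finset.univ (fun x' : ∀ i : Fin (n + 1), G i.succ =>
          ρ (Fin.cons z x')) := by
        have h := multilinearOn_comp_cons hρ z
        have huniv : (Finset.univ.filter (fun j : Fin (n + 1) =>
            j.succ ∈ (Finset.univ : Finset (Fin (n + 1 + 1))))) = Finset.univ := by
          apply Finset.filter_true_of_mem
          intro _ _
          exact Finset.mem_univ _
        rwa [huniv] at h
      have hβ'm : ∀ j : ιβ ⊕ {i : ιγ // J i = Finset.univ},
          MultilinearOn F Finset.univ
            ((Sum.elim (fun (j : ιβ) (x' : ∀ i : Fin (n + 1), G i.succ) => β j (Fin.cons z x'))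
              (fun (i : {i : ιγ // J i = Finset.univ}) (x' : ∀ i : Fin (n + 1), G i.succ) =>
                γ i.1 (Fin.cons z x'))) j) := by
        intro j
        rcases j with j | i
        · rw [Sum.elim_inl]
          have h := multilinearOn_comp_cons (hβ j) z
          have huniv : (Finset.univ.filter (fun j : Fin (n + 1) =>
              j.succ ∈ (Finset.univ : Finset (Fin (n + 1 + 1))))) = Finset.univ := by
            apply Finset.filter_true_of_mem
            intro _ _
            exact Finset.mem_univ _
          rwa [huniv] at h
        · rw [Sum.elim_inr]
          have h := multilinearOn_comp_cons (hγ i.1) z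
          rwa [hfiltJ i.1, i.2] at h
      have hγ'm : ∀ i : {i : ιγ // J i ≠ ∅ ∧ J i ≠ Finset.univ},
          MultilinearOn F (J i.1) (fun x' : ∀ i : Fin (n + 1), G i.succ =>
            γ i.1 (Fin.cons z x')) := by
        intro i
        have h := multilinearOn_comp_cons (hγ i.1) z
        rwa [hfiltJ i.1] at h
      -- the bias hypothesis for the restricted system
      have hbias'm : ∀ lam' : ιβ ⊕ {i : ιγ // J i = Finset.univ} → F,
          ‖expChar χ (fun x' : ∀ i : Fin (n + 1), G i.succ =>
            ρ (Fin.cons z x') + ∑ j, lam' j *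
              (Sum.elim (fun (j : ιβ) (x' : ∀ i : Fin (n + 1), G i.succ) => β j (Fin.cons z x'))
                (fun (i : {i : ιγ // J i = Finset.univ}) (x' : ∀ i : Fin (n + 1), G i.succ) =>
                  γ i.1 (Fin.cons z x'))) j x')‖
            < (Fintype.card F : ℝ) ^ (-(((n + 1)
                * (Fintype.card (ιβ ⊕ {i : ιγ // J i = Finset.univ})
                  + Fintype.card {i : ιγ // J i ≠ ∅ ∧ J i ≠ Finset.univ}) : ℕ) : ℤ)) := by
        intro lam'
        have hfn : (fun x' : ∀ i : Fin (n + 1), G i.succ =>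
            ρ (Fin.cons z x') + ∑ j, lam' j *
              (Sum.elim (fun (j : ιβ) (x' : ∀ i : Fin (n + 1), G i.succ) => β j (Fin.cons z x'))
                (fun (i : {i : ιγ // J i = Finset.univ}) (x' : ∀ i : Fin (n + 1), G i.succ) =>
                  γ i.1 (Fin.cons z x'))) j x')
            = fun x' => ΦB lam' (Fin.cons z x') := by
          funext x'
          rw [Fintype.sum_sum_type]
          simp only [Sum.elim_inl, Sum.elim_inr, hΦB, hΦβ]
          ring
        have hlin : LinAt (F := F) (0 : Fin (n + 1))
            (fun x' : ∀ i : Fin (n + 1), G i.succ =>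
              ρ (Fin.cons z x') + ∑ j, lam' j *
                (Sum.elim (fun (j : ιβ) (x' : ∀ i : Fin (n + 1), G i.succ) => β j (Fin.cons z x'))
                  (fun (i : {i : ιγ // J i = Finset.univ}) (x' : ∀ i : Fin (n + 1), G i.succ) =>
                    γ i.1 (Fin.cons z x'))) j x') :=
          linAt_combo (multilinearOn_linAt hρ'm (Finset.mem_univ _))
            (fun j => (multilinearOn_linAt (hβ'm j) (Finset.mem_univ _))) lam'
        rw [hfn] at hlin
        have hnorm := norm_expChar_eq_countSlice χ hχ
          (fun x' => ΦB lam' (Fin.cons z x')) (0 : Fin (n + 1)) hlin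
        rw [hfn, hnorm]
        have hlt : (countSlice (fun i : Fin (n + 1) => G i.succ) 0
              (fun x' => ΦB lam' (Fin.cons z x')) : ℝ)
            / (Fintype.card (∀ i : Fin (n + 1), G i.succ) : ℝ) < ε' := by
          rw [div_lt_iff₀ (by rw [← hcardX']; exact hcardX'pos)]
          calc (countSlice (fun i : Fin (n + 1) => G i.succ) 0
                (fun x' => ΦB lam' (Fin.cons z x')) : ℝ)
              < (cardX' : ℝ) * ε' := hgood lam'
            _ = ε' * (Fintype.card (∀ i : Fin (n + 1), G i.succ) : ℝ) := by
                rw [hcardX']; ring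
        apply lt_of_lt_of_le hlt
        rw [hε', hqdef]
        apply zpow_le_zpow_right₀ hq1
        have hcs : Fintype.card (ιβ ⊕ {i : ιγ // J i = Finset.univ})
            = r + Fintype.card {i : ιγ // J i = Finset.univ} := by
          rw [Fintype.card_sum, hr]
        have hle : (n + 1) * (Fintype.card (ιβ ⊕ {i : ιγ // J i = Finset.univ})
            + Fintype.card {i : ιγ // J i ≠ ∅ ∧ J i ≠ Finset.univ}) ≤ (n + 1) * (r + m) := by
          apply Nat.mul_le_mul_left
          rw [hcs]
          omega
        exact neg_le_neg (by exact_mod_cast hle)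
      -- apply the induction hypothesis
      obtain ⟨x', hx1, hx2, hx3⟩ := ih (fun i : Fin (n + 1) => G i.succ)
        (ιβ ⊕ {i : ιγ // J i = Finset.univ}) {i : ιγ // J i ≠ ∅ ∧ J i ≠ Finset.univ}
        (fun x' => ρ (Fin.cons z x')) hρ'm
        (Sum.elim (fun (j : ιβ) (x' : ∀ i : Fin (n + 1), G i.succ) => β j (Fin.cons z x'))
          (fun (i : {i : ιγ // J i = Finset.univ}) (x' : ∀ i : Fin (n + 1), G i.succ) =>
            γ i.1 (Fin.cons z x'))) hβ'm
        (fun i => J i.1) (fun i => i.2)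
        (fun i x' => γ i.1 (Fin.cons z x')) hγ'm
        hbias'm
      refine ⟨Fin.cons z x', hx1, fun j => hx2 (Sum.inl j), fun i => ?_⟩
      by_cases hA : J i = ∅
      · have h0 := hJempty i hA
        have heq := cons_eq_of_singleton (hγ i) h0 z x' 0
        rw [heq]
        have hk := (Finset.mem_filter.1 (by rwa [hkerZ] at hzker)).2
        exact hk ⟨i, hA⟩
      · by_cases hB : J i = Finset.univ
        · exact hx2 (Sum.inr ⟨i, hB⟩)
        · exact hx3 ⟨i, hA, hB⟩

end Aux

end NonzeroPointAux

/-- If `ρ, β₁, …, β_r` are multilinear forms on `G₁ × ⋯ × G_k` such that for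
every `λ ∈ F^r` the bias `|E χ(ρ(x) + Σ λᵢ βᵢ(x))|` is less than `f^(-k(r+m))`, then for any
multilinear forms `γ₁, …, γ_m` on proper nonempty subsets of the coordinates there is a point
`x` with `ρ(x) = 1`, all `βᵢ(x) = 0` and all `γᵢ(x_{Iᵢ}) = 0`. -/
theorem nonzero_point {k r m : ℕ} {F : Type*} [Field F] [Fintype F]
    {G : Fin k → Type*} [∀ i, AddCommGroup (G i)] [∀ i, Module F (G i)]
    [∀ i, Fintype (G i)]
    (χ : AddChar F ℂ) (hχ : χ ≠ 1)
    (ρ : (∀ i, G i) → F) (hρ : MultilinearOn F Finset.univ ρ)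
    (β : Fin r → ((∀ i, G i) → F)) (hβ : ∀ j, MultilinearOn F Finset.univ (β j))
    (hbias : ∀ lam : Fin r → F,
      ‖expChar χ (fun x => ρ x + ∑ j, lam j * β j x)‖
        < (Fintype.card F : ℝ) ^ (-((k * (r + m) : ℕ) : ℤ)))
    (I : Fin m → Finset (Fin k)) (hI : ∀ i, I i ≠ ∅ ∧ I i ≠ Finset.univ)
    (γ : Fin m → ((∀ i, G i) → F)) (hγ : ∀ i, MultilinearOn F (I i) (γ i)) :
    ∃ x : ∀ i, G i, ρ x = 1 ∧ (∀ j, β j x = 0) ∧ (∀ i, γ i x = 0) := by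
  exact NonzeroPointAux.aux χ hχ k G (Fin r) (Fin m) ρ hρ β hβ I hI γ hγ
    (by simpa [Fintype.card_fin] using hbias)
end

section
/- Define B = {(x_1, x_2, y_1, y_2) ∈ F_p² × F_p² : x_1 y_1 − x_2 y_2 = 0}, and partition B into the set Z = {(0,0,y_1,y_2)} ∪ {(x_1,x_2,0,0)} ∪ {(0,x_2,y_1,0)} ∪ {(x_1,0,0,y_2)} and for each λ ∈ F_p \ {0}, the set B_λ = {(λx, x, y, λy) : x, y ∈ F_p \ {0}}. Then for any function f : F_p \ {0} → F_p, the map φ : B → F_p defined by φ = 0 on Z and φ(x_1,x_2,y_1,y_2) = f(λ)·x_2 y_1 on B_λ is bilinear on B, in the sense that for each fixed (x_1,x_2), the map (y_1,y_2) ↦ φ(x_1,x_2,y_1,y_2) is linear on the subspace {(y_1,y_2) : (x_1,x_2,y_1,y_2) ∈ B}, and symmetrically. -/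
open scoped BigOperators

/-!
Away from `Z`, a point of `B` has all four coordinates nonzero and lies in
`B_λ` with `λ = x₁ / x₂ = y₂ / y₁`, so `φ(x, y) = f(x₁ / x₂) x₂ y₁ = f(y₂ / y₁) x₂ y₁`.
Hence on every slice `{y : (x, y) ∈ B}` the map `φ x` is either zero or the linear form
`y ↦ f(x₁ / x₂) x₂ y₁`, and on every slice `{x : (x, y) ∈ B}` it is either zero or
`x ↦ f(y₂ / y₁) y₁ x₂`. A map agreeing on each slice of the zero set of a bilinear form
with a linear map is bilinear on that zero set, because the slices are subspaces.
-/

/-- `φ` is bilinear on the set `B ⊆ G₁ × G₂`: each one-variable slice is linear where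
defined (it respects addition and scalar multiplication of points in the slice). -/
def BilinearOnSet {F : Type*} [Field F] {G₁ G₂ H : Type*}
    [AddCommGroup G₁] [Module F G₁] [AddCommGroup G₂] [Module F G₂]
    [AddCommGroup H] [Module F H]
    (B : Set (G₁ × G₂)) (φ : G₁ → G₂ → H) : Prop :=
  (∀ x y y', (x, y) ∈ B → (x, y') ∈ B → φ x (y + y') = φ x y + φ x y') ∧
  (∀ x (c : F) y, (x, y) ∈ B → φ x (c • y) = c • φ x y) ∧
  (∀ x x' y, (x, y) ∈ B → (x', y) ∈ B → φ (x + x') y = φ x y + φ x' y) ∧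
  (∀ (c : F) x y, (x, y) ∈ B → φ (c • x) y = c • φ x y)

theorem BilinearOnSet.of_eqOn_slices {F G₁ G₂ H K : Type*} [Field F]
    [AddCommGroup G₁] [Module F G₁] [AddCommGroup G₂] [Module F G₂]
    [AddCommGroup H] [Module F H] [AddCommGroup K] [Module F K]
    (β : G₁ →ₗ[F] G₂ →ₗ[F] K) (φ : G₁ → G₂ → H)
    (hright : ∀ x, ∃ L : G₂ →ₗ[F] H, ∀ y, β x y = 0 → φ x y = L y)
    (hleft : ∀ y, ∃ L : G₁ →ₗ[F] H, ∀ x, β x y = 0 → φ x y = L x) :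
    BilinearOnSet (F := F) {q | β q.1 q.2 = 0} φ := by
  refine ⟨fun x y y' hy hy' => ?_, fun x c y hy => ?_,
    fun x x' y hx hx' => ?_, fun c x y hx => ?_⟩
  · obtain ⟨L, hL⟩ := hright x
    have hsum : β x (y + y') = 0 := by rw [map_add, hy, hy', add_zero]
    rw [hL y hy, hL y' hy', hL _ hsum, map_add]
  · obtain ⟨L, hL⟩ := hright x
    have hsmul : β x (c • y) = 0 := by rw [map_smul, hy, smul_zero]
    rw [hL y hy, hL _ hsmul, map_smul]
  · obtain ⟨L, hL⟩ := hleft y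
    have hsum : β (x + x') y = 0 := by rw [map_add, LinearMap.add_apply, hx, hx', add_zero]
    rw [hL x hx, hL x' hx', hL _ hsum, map_add]
  · obtain ⟨L, hL⟩ := hleft y
    have hsmul : β (c • x) y = 0 := by rw [map_smul, LinearMap.smul_apply, hx, smul_zero]
    rw [hL x hx, hL _ hsmul, map_smul]

section SplitPairing

variable {K : Type*} [Field K]

def splitPairing (K : Type*) [Field K] : (K × K) →ₗ[K] (K × K) →ₗ[K] K :=
  LinearMap.mk₂ K (fun x y => x.1 * y.1 - x.2 * y.2)
    (fun _ _ _ => by simp only [Prod.fst_add, Prod.snd_add]; ring)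
    (fun _ _ _ => by simp only [Prod.smul_fst, Prod.smul_snd, smul_eq_mul]; ring)
    (fun _ _ _ => by simp only [Prod.fst_add, Prod.snd_add]; ring)
    (fun _ _ _ => by simp only [Prod.smul_fst, Prod.smul_snd, smul_eq_mul]; ring)

theorem splitPairing_eq_zero_iff {x y : K × K} :
    splitPairing K x y = 0 ↔ x.1 * y.1 = x.2 * y.2 :=
  sub_eq_zero

def exceptionalLocus (K : Type*) [Field K] : Set ((K × K) × (K × K)) :=
  {q | q.1 = 0} ∪ {q | q.2 = 0} ∪ {q | q.1.1 = 0 ∧ q.2.2 = 0} ∪ {q | q.1.2 = 0 ∧ q.2.1 = 0}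

variable {f : K → K} {φ : K × K → K × K → K}

theorem apply_eq_zero_of_coord_eq_zero (hφZ : ∀ q ∈ exceptionalLocus K, φ q.1 q.2 = 0)
    {x y : K × K} (hxy : splitPairing K x y = 0)
    (h : x.1 = 0 ∨ x.2 = 0 ∨ y.1 = 0 ∨ y.2 = 0) : φ x y = 0 := by
  rw [splitPairing_eq_zero_iff] at hxy
  apply hφZ (x, y)
  simp only [exceptionalLocus, Set.mem_union, Set.mem_ofPred_eq, Prod.ext_iff, Prod.fst_zero,
    Prod.snd_zero]
  rcases h with h | h | h | h <;> simp only [h, zero_mul, mul_zero, zero_eq_mul, mul_eq_zero]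
    at hxy <;> tauto

theorem apply_eq_of_coords_ne_zero
    (hφB : ∀ lam x y : K, lam ≠ 0 → x ≠ 0 → y ≠ 0 → φ (lam * x, x) (y, lam * y) = f lam * x * y)
    {x y : K × K} (hxy : splitPairing K x y = 0) (hx₁ : x.1 ≠ 0) (hx₂ : x.2 ≠ 0) (hy₁ : y.1 ≠ 0) :
    φ x y = f (x.1 / x.2) * x.2 * y.1 := by
  rw [splitPairing_eq_zero_iff] at hxy
  have hx : (x.1 / x.2 * x.2, x.2) = x := Prod.ext (div_mul_cancel₀ _ hx₂) rfl
  have hy : (y.1, x.1 / x.2 * y.1) = y := by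
    refine Prod.ext rfl ?_
    rw [div_mul_eq_mul_div, hxy, mul_div_cancel_left₀ _ hx₂]
  rw [← hφB _ _ _ (div_ne_zero hx₁ hx₂) hx₂ hy₁, hx, hy]

theorem exists_linearMap_eq_on_right_slice
    (hφZ : ∀ q ∈ exceptionalLocus K, φ q.1 q.2 = 0)
    (hφB : ∀ lam x y : K, lam ≠ 0 → x ≠ 0 → y ≠ 0 → φ (lam * x, x) (y, lam * y) = f lam * x * y)
    (x : K × K) :
    ∃ L : (K × K) →ₗ[K] K, ∀ y, splitPairing K x y = 0 → φ x y = L y := by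
  by_cases hx₁ : x.1 = 0
  · exact ⟨0, fun y hxy => apply_eq_zero_of_coord_eq_zero hφZ hxy (Or.inl hx₁)⟩
  refine ⟨(f (x.1 / x.2) * x.2) • LinearMap.fst K K K, fun y hxy => ?_⟩
  by_cases h : x.2 = 0 ∨ y.1 = 0
  · rw [apply_eq_zero_of_coord_eq_zero hφZ hxy (by tauto)]
    rcases h with h | h <;> simp [h]
  push Not at h
  rw [apply_eq_of_coords_ne_zero hφB hxy hx₁ h.1 h.2]
  simp

theorem exists_linearMap_eq_on_left_slice
    (hφZ : ∀ q ∈ exceptionalLocus K, φ q.1 q.2 = 0)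
    (hφB : ∀ lam x y : K, lam ≠ 0 → x ≠ 0 → y ≠ 0 → φ (lam * x, x) (y, lam * y) = f lam * x * y)
    (y : K × K) :
    ∃ L : (K × K) →ₗ[K] K, ∀ x, splitPairing K x y = 0 → φ x y = L x := by
  by_cases hy₂ : y.2 = 0
  · exact ⟨0, fun x hxy => apply_eq_zero_of_coord_eq_zero hφZ hxy (by tauto)⟩
  refine ⟨(f (y.2 / y.1) * y.1) • LinearMap.snd K K K, fun x hxy => ?_⟩
  by_cases h : x.2 = 0 ∨ y.1 = 0
  · rw [apply_eq_zero_of_coord_eq_zero hφZ hxy (by tauto)]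
    rcases h with h | h <;> simp [h]
  push Not at h
  have hxy' := splitPairing_eq_zero_iff.mp hxy
  have hx₁ : x.1 ≠ 0 := left_ne_zero_of_mul (hxy' ▸ mul_ne_zero h.1 hy₂)
  have hratio : y.2 / y.1 = x.1 / x.2 := by rw [div_eq_div_iff h.2 h.1, hxy', mul_comm]
  rw [apply_eq_of_coords_ne_zero hφB hxy hx₁ h.1 h.2, hratio]
  simp only [LinearMap.smul_apply, LinearMap.snd_apply, smul_eq_mul]
  ring

end SplitPairing

/-- On the bilinear variety `B = {x₁y₁ - x₂y₂ = 0} ⊆ 𝔽_p² × 𝔽_p²`,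
for any `f : 𝔽_p \ {0} → 𝔽_p`, the map which is `0` on `Z` and equal to `f(λ)·x₂y₁` on
`B_λ = {(λx, x, y, λy) : x, y ≠ 0}` is bilinear on `B`. -/
theorem phi_f_is_bilinear (p : ℕ) [Fact p.Prime] (f : ZMod p → ZMod p)
    (B : Set ((ZMod p × ZMod p) × (ZMod p × ZMod p)))
    (hB : B = {q | q.1.1 * q.2.1 - q.1.2 * q.2.2 = 0})
    (Z : Set ((ZMod p × ZMod p) × (ZMod p × ZMod p)))
    (hZ : Z = {q | q.1 = 0} ∪ {q | q.2 = 0} ∪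
      {q | q.1.1 = 0 ∧ q.2.2 = 0} ∪ {q | q.1.2 = 0 ∧ q.2.1 = 0})
    (φ : (ZMod p × ZMod p) → (ZMod p × ZMod p) → ZMod p)
    (hφZ : ∀ q ∈ Z, φ q.1 q.2 = 0)
    (hφB : ∀ lam x y : ZMod p, lam ≠ 0 → x ≠ 0 → y ≠ 0 →
      φ (lam * x, x) (y, lam * y) = f lam * x * y) :
    BilinearOnSet (F := ZMod p) B φ := by
  subst hB hZ
  exact BilinearOnSet.of_eqOn_slices (splitPairing (ZMod p)) φ
    (exists_linearMap_eq_on_right_slice hφZ hφB) (exists_linearMap_eq_on_left_slice hφZ hφB)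
end

section
/- There exists a prime p and a bilinear map φ : B → F_p on the bilinear variety B = {(x_1,x_2,y_1,y_2) ∈ F_p² × F_p² : x_1y_1 − x_2y_2 = 0} (bilinear in the sense that each slice is linear where defined) that does not extend to a globally bilinear map Φ : F_p² × F_p² → F_p. In fact, for every prime p with p^{p−1} > p⁴ (e.g. p = 7), a counting argument shows such φ exists: the maps ψ_f(x) = φ_f(x,1,1,x) realize p^{p−1} distinct functions as f ranges over functions F_p \ {0} → F_p, while only p⁴ functions arise as restrictions of biaffine maps on F_p × F_p to the diagonal. -/
open scoped BigOperators

/-- For every prime `p` with `p^(p-1) > p⁴` (e.g. `p = 7`), there is a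
bilinear map `φ` on the bilinear variety `B = {x₁y₁ - x₂y₂ = 0} ⊆ 𝔽_p² × 𝔽_p²` that does
not agree on `B` with any globally bilinear map `Φ : 𝔽_p² × 𝔽_p² → 𝔽_p`. -/
theorem exists_nonextendable_bilinear_map (p : ℕ) [Fact p.Prime]
    (hp : p ^ 4 < p ^ (p - 1))
    (B : Set ((ZMod p × ZMod p) × (ZMod p × ZMod p)))
    (hB : B = {q | q.1.1 * q.2.1 - q.1.2 * q.2.2 = 0}) :
    ∃ φ : (ZMod p × ZMod p) → (ZMod p × ZMod p) → ZMod p,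
      BilinearOnSet (F := ZMod p) B φ ∧
      ¬ ∃ Φ : (ZMod p × ZMod p) →ₗ[ZMod p] (ZMod p × ZMod p) →ₗ[ZMod p] ZMod p,
          ∀ q ∈ B, Φ q.1 q.2 = φ q.1 q.2 := by
  have hp1 : 1 < p := (Fact.out : p.Prime).one_lt
  have hp6 : 6 ≤ p := by
    have h4 : 4 < p - 1 := by
      exact (Nat.pow_lt_pow_iff_right hp1).mp hp
    omega
  -- coefficient function
  set c : ZMod p × ZMod p → ZMod p := fun x => if x.2 = 0 then 0 else x.1 ^ 3 / x.2 ^ 2 with hc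
  refine ⟨fun x y => c x * y.1, ⟨?_, ?_, ?_, ?_⟩, ?_⟩
  · intro x y y' _ _
    simp [mul_add]
  · intro x k y _
    simp [smul_eq_mul]; ring
  · -- additivity in x on B
    intro x x' y hx hx'
    subst hB
    simp only [Set.mem_setOf_eq, sub_eq_zero] at hx hx'
    -- key: c x * y.1 ^ 3 = x.2 * y.2 ^ 3 whenever x.1 * y.1 = x.2 * y.2
    have key : ∀ x : ZMod p × ZMod p, x.1 * y.1 = x.2 * y.2 →
        c x * y.1 ^ 3 = x.2 * y.2 ^ 3 := by
      intro x hxy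
      by_cases h2 : x.2 = 0
      · simp [hc, h2]
      · have hcx : c x = x.1 ^ 3 / x.2 ^ 2 := by simp [hc, h2]
        rw [hcx]
        field_simp
        linear_combination (x.1^2*y.1^2 + x.1*y.1*x.2*y.2 + x.2^2*y.2^2) * hxy
    by_cases hy : y.1 = 0
    · simp [hy]
    have hadd : (x + x').1 * y.1 = (x + x').2 * y.2 := by
      simp only [Prod.fst_add, Prod.snd_add]; linear_combination hx + hx'
    have h1 := key x hx
    have h2 := key x' hx'
    have h3 := key (x + x') hadd
    simp only [Prod.snd_add] at h3
    apply mul_right_cancel₀ (pow_ne_zero 2 hy)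
    linear_combination h3 - h1 - h2
  · -- scalar in x
    intro k x y _
    by_cases hk : k = 0
    · simp [hc, hk]
    by_cases h2 : x.2 = 0
    · simp [hc, h2, smul_eq_mul, Prod.smul_snd, hk]
    · have hks : (k • x).2 = k * x.2 := rfl
      have hkf : (k • x).1 = k * x.1 := rfl
      have : (k • x).2 ≠ 0 := by rw [hks]; exact mul_ne_zero hk h2
      simp only [hc, this, if_neg, h2, smul_eq_mul, hks, hkf, mul_ne_zero hk h2, if_false]
      field_simp
  · rintro ⟨Φ, h⟩
    have key : ∀ l : ZMod p, l ^ 3 =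
        l * Φ (1, 0) (1, 0) + l ^ 2 * Φ (1, 0) (0, 1) + Φ (0, 1) (1, 0) + l * Φ (0, 1) (0, 1) := by
      intro l
      have hmem : (((l, 1), (1, l)) : (ZMod p × ZMod p) × (ZMod p × ZMod p)) ∈ B := by
        rw [hB]; simp [Set.mem_setOf_eq, mul_comm]
      have hq := h ((l, 1), (1, l)) hmem
      have hcl : c (l, 1) = l ^ 3 := by simp [hc]
      dsimp only at hq
      rw [hcl, mul_one] at hq
      have hx : ((l, 1) : ZMod p × ZMod p) = l • (1, 0) + (0, 1) := by
        simp [Prod.ext_iff]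
      have hy : ((1, l) : ZMod p × ZMod p) = (1, 0) + l • (0, 1) := by
        simp [Prod.ext_iff]
      rw [hx, hy] at hq
      simp only [map_add, map_smul, LinearMap.add_apply, LinearMap.smul_apply,
        smul_eq_mul] at hq
      linear_combination -hq
    have h6 : ((6 : ℕ) : ZMod p) = 0 := by
      push_cast
      linear_combination key 3 - 3 * key 2 + 3 * key 1 - key 0
    have hdvd : p ∣ 6 := (ZMod.natCast_eq_zero_iff 6 p).mp h6
    have hle : p ≤ 6 := Nat.le_of_dvd (by norm_num) hdvd
    have hpe : p = 6 := le_antisymm hle hp6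
    exact absurd (hpe ▸ (Fact.out : p.Prime)) (by norm_num)
end
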